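/- arXiv:1702.01374 — 5 statements merged into one kernel-verified Lean document; each statement's English description precedes it below -/
import Mathlib

section
/- For any integer n ≥ 0 with n ≥ 1 and any rational (or real) x, the binomial coefficient satisfies: C(x+n, n) = Σ_{i=1}^{n} (-1)^{i+1} · C(x+n, i) · C(x+n-i, n-i) · C(n, i) / C(2n-1, i), where C(y, k) denotes the generalized binomial coefficient y(y-1)···(y-k+1)/k!. -/
/-!
Since `C(y, i) C(y - i, n - i) = C(n, i) C(y, n)`, the right-hand side is `C(x + n, n)` times
`∑_{i=1}^n (-1)^(i+1) C(n, i)² / C(2n - 1, i)`, so it suffices that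
`∑_{i=0}^n (-1)^i C(n, i)² / C(m, i) = 0` whenever `n ≤ m < 2n`. As
`C(n, i) / C(m, i) = C(m - i, n - i) / C(m, n)`, after the reflection `i ↦ n - i` this alternating
sum is the `n`-th forward difference at `0` of `k ↦ C(k + m - n, m - n)`, a polynomial in `k` of
degree `m - n < n`, hence it vanishes.
-/

open Finset

/-- Generalized binomial coefficient `C(x, k) = x(x-1)⋯(x-k+1)/k!` for rational `x`. -/
noncomputable def gchoose (x : ℚ) (k : ℕ) : ℚ :=
  (∏ i ∈ Finset.range k, (x - i)) / (Nat.factorial k)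

theorem gchoose_eq_ringChoose (x : ℚ) (k : ℕ) : gchoose x k = Ring.choose x k := by
  rw [Ring.choose_eq_smul, gchoose, ← Polynomial.aeval_eq_smeval, Polynomial.aeval_def,
    Polynomial.eval₂_eq_eval_map, descPochhammer_map, descPochhammer_eval_eq_prod_range,
    smul_eq_mul, inv_mul_eq_div]

theorem gchoose_natCast (m k : ℕ) : gchoose m k = m.choose k := by
  rw [gchoose_eq_ringChoose, Ring.choose_natCast]

theorem gchoose_mul_gchoose_sub (x : ℚ) {n i : ℕ} (hi : i ≤ n) :
    gchoose x i * gchoose (x - i) (n - i) = n.choose i * gchoose x n := by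
  simp only [gchoose_eq_ringChoose, ← Ring.choose_smul_choose x hi, nsmul_eq_mul]

theorem fwdDiff_iter_choose_eq_zero_of_lt {r n : ℕ} (h : r < n) :
    (fwdDiff 1)^[n] (fun x ↦ x.choose r : ℕ → ℤ) = 0 := by
  obtain ⟨k, rfl⟩ := Nat.exists_eq_add_of_lt h
  have hr := fwdDiff_iter_choose 0 r
  rw [add_zero] at hr
  rw [show r + k + 1 = k + 1 + r by ring, Function.iterate_add_apply, hr,
    Function.iterate_succ_apply]
  simp only [Nat.choose_zero_right, Nat.cast_one, fwdDiff_const]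
  exact Function.iterate_fixed (fwdDiff_const 1 0) k

theorem alternating_sum_choose_mul_add_choose {r n : ℕ} (m : ℕ) (h : r < n) :
    ∑ k ∈ range (n + 1), (-1 : ℤ) ^ (n - k) * n.choose k * (k + m).choose r = 0 := by
  have hshift := fwdDiff_iter_comp_add 1 (fun x ↦ x.choose r : ℕ → ℤ) m n 0
  rw [fwdDiff_iter_choose_eq_zero_of_lt h, fwdDiff_iter_eq_sum_shift] at hshift
  simpa using hshift

theorem alternating_sum_choose_mul_choose_sub {n m : ℕ} (hnm : n ≤ m) (hm : m < 2 * n) :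
    ∑ i ∈ range (n + 1), (-1 : ℤ) ^ i * n.choose i * (m - i).choose (n - i) = 0 := by
  rw [← sum_range_reflect,
    ← alternating_sum_choose_mul_add_choose (m - n) (by omega : m - n < n)]
  refine sum_congr rfl fun k hk => ?_
  have hk : k ≤ n := Nat.lt_succ_iff.mp (mem_range.mp hk)
  rw [add_tsub_cancel_right, Nat.choose_symm hk, show m - (n - k) = k + (m - n) by omega,
    show n - (n - k) = k by omega, Nat.choose_symm_add]

theorem alternating_sum_choose_sq_div_choose {n m : ℕ} (hnm : n ≤ m) (hm : m < 2 * n) :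
    ∑ i ∈ range (n + 1), (-1 : ℚ) ^ i * n.choose i ^ 2 / m.choose i = 0 := by
  have hmn : (m.choose n : ℚ) ≠ 0 := by exact_mod_cast (Nat.choose_pos hnm).ne'
  have hterm : ∀ i ∈ range (n + 1), (-1 : ℚ) ^ i * n.choose i ^ 2 / m.choose i =
      ((-1 : ℤ) ^ i * n.choose i * (m - i).choose (n - i) : ℤ) / m.choose n := by
    intro i hi
    have hi : i ≤ n := Nat.lt_succ_iff.mp (mem_range.mp hi)
    have hmi : (m.choose i : ℚ) ≠ 0 := by exact_mod_cast (Nat.choose_pos (hi.trans hnm)).ne'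
    have hchain : (m.choose n * n.choose i : ℚ) = m.choose i * (m - i).choose (n - i) := by
      exact_mod_cast Nat.choose_mul (n := m) hi
    rw [div_eq_div_iff hmi hmn]
    push_cast
    linear_combination (-1 : ℚ) ^ i * n.choose i * hchain
  rw [sum_congr rfl hterm, ← sum_div, ← Int.cast_sum,
    alternating_sum_choose_mul_choose_sub hnm hm, Int.cast_zero, zero_div]

theorem sum_Icc_alternating_choose_sq_div_choose {n m : ℕ} (hnm : n ≤ m) (hm : m < 2 * n) :
    ∑ i ∈ Icc 1 n, (-1 : ℚ) ^ (i + 1) * n.choose i ^ 2 / m.choose i = 1 := by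
  have hzero := alternating_sum_choose_sq_div_choose hnm hm
  rw [range_eq_Ico, sum_eq_sum_Ico_succ_bot (by omega), Ico_add_one_right_eq_Icc] at hzero
  simp only [pow_zero, Nat.choose_zero_right, Nat.cast_one, one_pow, div_one, mul_one,
    zero_add] at hzero
  simp only [pow_succ (-1 : ℚ), mul_neg_one, neg_mul, neg_div, sum_neg_distrib]
  linarith

theorem stmt0 (n : ℕ) (hn : 1 ≤ n) (x : ℚ) :
    gchoose (x + n) n =
      ∑ i ∈ Finset.Icc 1 n, (-1 : ℚ) ^ (i + 1) * gchoose (x + n) i *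
        gchoose (x + n - i) (n - i) * gchoose (n : ℚ) i / gchoose (2 * (n : ℚ) - 1) i := by
  have hcast : 2 * (n : ℚ) - 1 = (2 * n - 1 : ℕ) := by
    rw [Nat.cast_sub (by omega)]
    push_cast
    ring
  have hterm : ∀ i ∈ Icc 1 n, (-1 : ℚ) ^ (i + 1) * gchoose (x + n) i *
        gchoose (x + n - i) (n - i) * gchoose (n : ℚ) i / gchoose (2 * (n : ℚ) - 1) i =
      gchoose (x + n) n * ((-1 : ℚ) ^ (i + 1) * n.choose i ^ 2 / (2 * n - 1).choose i) := by
    intro i hi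
    rw [mul_assoc _ (gchoose _ i), gchoose_mul_gchoose_sub _ (mem_Icc.mp hi).2, hcast,
      gchoose_natCast, gchoose_natCast]
    ring
  rw [sum_congr rfl hterm, ← mul_sum,
    sum_Icc_alternating_choose_sq_div_choose (by omega) (by omega), mul_one]
end

section
/- For every integer n ≥ 1, Σ_{k=0}^{n} C(n,k)^2 · (-1)^k · k! · (2n-1-k)! / (2n-1)! = 0. -/
/-!
Write `u k = C(n,k)² k! (2n-1-k)!`, so the summand is `(-1)ᵏ u k / (2n-1)!`. Consecutive
terms satisfy `u (k+1) (k+1) (2n-1-k) = u k (n-k)²`, which makes the partial sums telescope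
in closed form: `n² ∑_{k<m} (-1)ᵏ u k = (-1)ᵐ u m (m² - 2nm)` for `m ≤ n`. At `m = n` the
right-hand side is `-n² (-1)ⁿ u n`, exactly cancelling the last term.
-/

open Nat Finset

def chooseSqFactorial (n k : ℕ) : ℕ := n.choose k ^ 2 * k ! * (2 * n - 1 - k)!

lemma chooseSqFactorial_succ_mul {n k : ℕ} (hk : k < n) :
    chooseSqFactorial n (k + 1) * ((k + 1) * (2 * n - 1 - k)) =
      chooseSqFactorial n k * (n - k) ^ 2 := by
  have hchoose : n.choose (k + 1) * (k + 1) = n.choose k * (n - k) :=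
    Nat.choose_succ_right_eq n k
  have hfact : (2 * n - 1 - k) * (2 * n - 1 - (k + 1))! = (2 * n - 1 - k)! := by
    rw [show 2 * n - 1 - (k + 1) = 2 * n - 1 - k - 1 by omega]
    exact Nat.mul_factorial_pred (by omega)
  unfold chooseSqFactorial
  rw [Nat.factorial_succ, ← hfact]
  calc _ = (n.choose (k + 1) * (k + 1)) ^ 2 * k ! * ((2 * n - 1 - k) * (2 * n - 1 - (k + 1))!) := by
        ring
    _ = _ := by rw [hchoose]; ring

lemma sq_mul_sum_range_alternating_chooseSqFactorial {n m : ℕ} (hm : m ≤ n) :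
    (n : ℤ) ^ 2 * ∑ k ∈ range m, (-1) ^ k * (chooseSqFactorial n k : ℤ) =
      (-1) ^ m * chooseSqFactorial n m * ((m : ℤ) ^ 2 - 2 * n * m) := by
  induction m with
  | zero => simp
  | succ m ih =>
    have hmn : m < n := hm
    have hstep := congrArg (Nat.cast : ℕ → ℤ) (chooseSqFactorial_succ_mul hmn)
    have hsub : ((2 * n - 1 - m : ℕ) : ℤ) = 2 * n - 1 - m := by omega
    push_cast [hsub, Nat.cast_sub hmn.le] at hstep
    rw [sum_range_succ, mul_add, ih hmn.le]
    push_cast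
    linear_combination -(-1) ^ m * hstep

lemma sum_range_alternating_chooseSqFactorial {n : ℕ} (hn : n ≠ 0) :
    ∑ k ∈ range (n + 1), (-1) ^ k * (chooseSqFactorial n k : ℤ) = 0 := by
  have hsq : (n : ℤ) ^ 2 ≠ 0 := pow_ne_zero 2 (Nat.cast_ne_zero.mpr hn)
  apply (mul_right_injective₀ hsq).eq_iff.mp
  rw [sum_range_succ, mul_add, sq_mul_sum_range_alternating_chooseSqFactorial le_rfl]
  ring

theorem stmt2 (n : ℕ) (hn : 1 ≤ n) :
    ∑ k ∈ Finset.range (n + 1),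
      ((n.choose k : ℚ)) ^ 2 * (-1 : ℚ) ^ k * (Nat.factorial k : ℚ) *
        (Nat.factorial (2 * n - 1 - k) : ℚ) / (Nat.factorial (2 * n - 1) : ℚ) = 0 := by
  have hsum := congrArg (Int.cast : ℤ → ℚ)
    (sum_range_alternating_chooseSqFactorial (n := n) (by omega))
  push_cast [chooseSqFactorial] at hsum
  rw [← sum_div, div_eq_zero_iff]
  exact Or.inl ((sum_congr rfl fun k _ => by ring).trans hsum)
end

section
/- For all integers h ≥ 1 and 0 ≤ n ≤ h-1, and any rational x: (-1)^n · C(x+n-h, n) · C(h-1, n) / C(2h-1, n) = Σ_{i=0}^{n} (-1)^{n-i} · C(x+n-i, n-i) · C(x+h, i) · (h! / (h-i)!) · ((2h-1-i)! / (2h-1)!). -/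
lemma gchoose_zero (x : ℚ) : gchoose x 0 = 1 := by
  simp [gchoose]

lemma gchoose_succ (x : ℚ) (k : ℕ) :
    gchoose x (k + 1) = gchoose x k * (x - k) / (k + 1) := by
  have : (Nat.factorial k : ℚ) ≠ 0 := by positivity
  simp only [gchoose, Finset.prod_range_succ, Nat.factorial_succ]
  push_cast
  field_simp

lemma gchoose_add_one_succ (y : ℚ) (k : ℕ) :
    gchoose (y + 1) (k + 1) = gchoose y k * (y + 1) / (k + 1) := by
  have : (Nat.factorial k : ℚ) ≠ 0 := by positivity
  simp only [gchoose, Finset.prod_range_succ', Nat.factorial_succ, Nat.cast_succ,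
    add_sub_add_right_eq_sub, Nat.cast_zero, sub_zero]
  push_cast
  field_simp

lemma gchoose_natCast_ne_zero {m k : ℕ} (hk : k ≤ m) : gchoose (m : ℚ) k ≠ 0 := by
  refine div_ne_zero (Finset.prod_ne_zero_iff.mpr fun j hj => ?_)
    (Nat.cast_ne_zero.mpr (Nat.factorial_ne_zero k))
  have : j < m := (Finset.mem_range.mp hj).trans_le hk
  exact sub_ne_zero.mpr (by exact_mod_cast this.ne')

noncomputable def wzTerm (h : ℕ) (x : ℚ) (n i : ℕ) : ℚ :=
  (-1 : ℚ) ^ (n - i) * gchoose (x + n - i) (n - i) *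
    gchoose (x + h) i * ((Nat.factorial h : ℚ) / (Nat.factorial (h - i) : ℚ)) *
    ((Nat.factorial (2 * h - 1 - i) : ℚ) / (Nat.factorial (2 * h - 1) : ℚ))

lemma wzTerm_succ {h n i : ℕ} (x : ℚ) (hi : i ≤ n) :
    ((n : ℚ) + 1 - i) * wzTerm h x (n + 1) i = -(x + n + 1 - i) * wzTerm h x n i := by
  have hcast : ((n - i : ℕ) : ℚ) = n - i := Nat.cast_sub hi
  rw [wzTerm, wzTerm, Nat.sub_add_comm hi, pow_succ,
    show x + ((n + 1 : ℕ) : ℚ) - i = (x + n - i) + 1 by push_cast; ring,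
    gchoose_add_one_succ, hcast]
  have : (n : ℚ) - i + 1 ≠ 0 := by
    have : (i : ℚ) ≤ n := by exact_mod_cast hi
    linarith
  field_simp
  ring

lemma wzTerm_succ_succ {h i : ℕ} (x : ℚ) (n : ℕ) (hi : i < h) :
    ((i : ℚ) + 1) * (2 * h - 1 - i) * wzTerm h x (n + 1) (i + 1) =
      (x + h - i) * (h - i) * wzTerm h x n i := by
  obtain ⟨k, rfl⟩ := Nat.exists_eq_add_of_lt hi
  rw [wzTerm, wzTerm, Nat.add_sub_add_right,
    show x + ((n + 1 : ℕ) : ℚ) - ((i + 1 : ℕ) : ℚ) = x + n - i by push_cast; ring,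
    gchoose_succ, show i + k + 1 - i = k + 1 by omega, show i + k + 1 - (i + 1) = k by omega,
    show 2 * (i + k + 1) - 1 - i = i + 2 * k + 1 by omega,
    show 2 * (i + k + 1) - 1 - (i + 1) = i + 2 * k by omega,
    Nat.factorial_succ k, Nat.factorial_succ (i + 2 * k)]
  push_cast
  have : (Nat.factorial k : ℚ) ≠ 0 := by positivity
  have : (Nat.factorial (i + 2 * k) : ℚ) ≠ 0 := by positivity
  have : (Nat.factorial (2 * (i + k + 1) - 1) : ℚ) ≠ 0 := by positivity
  field_simp
  ring

lemma wzTerm_wz_step {h n i : ℕ} (x : ℚ) (hi : i ≤ n) (hih : i < h) :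
    ((n : ℚ) + 1) * (2 * h - 1 - n) * wzTerm h x (n + 1) i
        + (x + n + 1 - h) * (h - 1 - n) * wzTerm h x n i =
      (i : ℚ) * (2 * h - i) * wzTerm h x (n + 1) i
        - ((i + 1 : ℕ) : ℚ) * (2 * h - ((i + 1 : ℕ) : ℚ)) * wzTerm h x (n + 1) (i + 1) := by
  have hpos : (n : ℚ) + 1 - i ≠ 0 := by
    have : (i : ℚ) ≤ n := by exact_mod_cast hi
    linarith
  refine mul_left_cancel₀ hpos ?_
  push_cast
  linear_combination (((n : ℚ) + 1) * (2 * h - 1 - n) - i * (2 * h - i)) * wzTerm_succ x hi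
    + ((n : ℚ) + 1 - i) * wzTerm_succ_succ x n hih

lemma sum_wzTerm_succ {h n : ℕ} (x : ℚ) (hn : n + 2 ≤ h) :
    ((n : ℚ) + 1) * (2 * h - 1 - n) * ∑ i ∈ Finset.range (n + 2), wzTerm h x (n + 1) i =
      -((x + n + 1 - h) * (h - 1 - n)) * ∑ i ∈ Finset.range (n + 1), wzTerm h x n i := by
  have htel := Finset.sum_range_sub' (fun j : ℕ => (j : ℚ) * (2 * h - j) * wzTerm h x (n + 1) j)
    (n + 1)
  have hstep : ∀ i ∈ Finset.range (n + 1), _ := fun i hi =>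
    have hin := Finset.mem_range_succ_iff.mp hi
    wzTerm_wz_step (h := h) x hin (by omega)
  rw [← Finset.sum_congr rfl hstep, Finset.sum_add_distrib, ← Finset.mul_sum,
    ← Finset.mul_sum] at htel
  rw [Finset.sum_range_succ]
  push_cast at htel
  linear_combination htel

noncomputable def wzClosedForm (h : ℕ) (x : ℚ) (n : ℕ) : ℚ :=
  (-1 : ℚ) ^ n * gchoose (x + n - h) n * gchoose ((h : ℚ) - 1) n / gchoose (2 * (h : ℚ) - 1) n

lemma wzClosedForm_succ {h n : ℕ} (x : ℚ) (hn : n + 2 ≤ h) :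
    ((n : ℚ) + 1) * (2 * h - 1 - n) * wzClosedForm h x (n + 1) =
      -((x + n + 1 - h) * (h - 1 - n)) * wzClosedForm h x n := by
  have hne : gchoose (2 * (h : ℚ) - 1) n ≠ 0 := by
    have := gchoose_natCast_ne_zero (m := 2 * h - 1) (k := n) (by omega)
    rwa [Nat.cast_sub (by omega), Nat.cast_mul, Nat.cast_ofNat, Nat.cast_one] at this
  have hne' : 2 * (h : ℚ) - 1 - n ≠ 0 := by
    have : (n : ℚ) + 2 ≤ h := by exact_mod_cast hn
    linarith
  rw [wzClosedForm, wzClosedForm,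
    show x + ((n + 1 : ℕ) : ℚ) - h = (x + n - h) + 1 by push_cast; ring,
    gchoose_add_one_succ, gchoose_succ, gchoose_succ, pow_succ]
  field_simp
  ring

lemma wzClosedForm_eq_sum {h n : ℕ} (x : ℚ) (hn : n ≤ h - 1) :
    wzClosedForm h x n = ∑ i ∈ Finset.range (n + 1), wzTerm h x n i := by
  induction n with
  | zero => simp [wzClosedForm, wzTerm, gchoose_zero, Nat.factorial_ne_zero]
  | succ n ih =>
    have hA : ((n : ℚ) + 1) * (2 * h - 1 - n) ≠ 0 := by
      have : (n : ℚ) + 2 ≤ h := by exact_mod_cast (by omega : n + 2 ≤ h)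
      exact mul_ne_zero (by positivity) (by linarith)
    refine mul_left_cancel₀ hA ?_
    rw [wzClosedForm_succ x (by omega), sum_wzTerm_succ x (by omega), ih (by omega)]

theorem stmt3_general (h n : ℕ) (hn : n ≤ h - 1) (x : ℚ) :
    (-1 : ℚ) ^ n * gchoose (x + n - h) n * gchoose ((h : ℚ) - 1) n / gchoose (2 * (h : ℚ) - 1) n =
      ∑ i ∈ Finset.range (n + 1), (-1 : ℚ) ^ (n - i) * gchoose (x + n - i) (n - i) *
        gchoose (x + h) i * ((Nat.factorial h : ℚ) / (Nat.factorial (h - i) : ℚ)) *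
        ((Nat.factorial (2 * h - 1 - i) : ℚ) / (Nat.factorial (2 * h - 1) : ℚ)) :=
  wzClosedForm_eq_sum x hn

theorem stmt3 (h n : ℕ) (hh : 1 ≤ h) (hn : n ≤ h - 1) (x : ℚ) :
    (-1 : ℚ) ^ n * gchoose (x + n - h) n * gchoose ((h : ℚ) - 1) n / gchoose (2 * (h : ℚ) - 1) n =
      ∑ i ∈ Finset.range (n + 1), (-1 : ℚ) ^ (n - i) * gchoose (x + n - i) (n - i) *
        gchoose (x + h) i * ((Nat.factorial h : ℚ) / (Nat.factorial (h - i) : ℚ)) *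
        ((Nat.factorial (2 * h - 1 - i) : ℚ) / (Nat.factorial (2 * h - 1) : ℚ)) :=
  stmt3_general h n hn x
end

section
/- For integers p, q ≥ 0 and any rational x, the binomial coefficient satisfies the addition formula: C(x, p+q) = C(x, p)·C(x, q) + Σ_{i=1}^{max(p,q)} (-1)^i · C(x-i, p-i) · C(x-i, q-i) · C(x+i, i) · C(x, i) · C(2i, i)^2 / (2 · C(p+i, i) · C(q+i, i) · C(2i-1, i-1)^2). -/
/-- Generalized binomial coefficient with integer lower index, vanishing for negative indices. -/
noncomputable def gchooseZ (x : ℚ) (k : ℤ) : ℚ :=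
  if k < 0 then 0 else gchoose x k.toNat

namespace Aux4

lemma fact_ne (k : ℕ) : ((Nat.factorial k : ℚ)) ≠ 0 := by
  exact_mod_cast k.factorial_ne_zero

lemma gchoose_zero (x : ℚ) : gchoose x 0 = 1 := by simp [gchoose]

lemma gchoose_one (x : ℚ) : gchoose x 1 = x := by simp [gchoose]

lemma g1 (x : ℚ) (k : ℕ) :
    gchoose x (k+1) * ((k:ℚ)+1) = gchoose x k * (x - k) := by
  unfold gchoose
  rw [Finset.prod_range_succ, Nat.factorial_succ]
  have h1 := fact_ne k
  push_cast
  field_simp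

lemma g2 (x : ℚ) (k : ℕ) :
    gchoose x (k+1) * ((k:ℚ)+1) = x * gchoose (x-1) k := by
  unfold gchoose
  rw [Finset.prod_range_succ', Nat.factorial_succ]
  have h1 := fact_ne k
  have h2 : ∀ i ∈ Finset.range k, x - ((i:ℚ)+1) = (x-1) - i := by intro i _; ring
  push_cast
  rw [Finset.prod_congr rfl h2]
  field_simp
  ring

lemma g3 (y : ℚ) (k : ℕ) :
    gchoose (y+1) k * (y+1-k) = (y+1) * gchoose y k := by
  have h1 := g1 (y+1) k
  have h2 := g2 (y+1) k
  have h3 : y + 1 - 1 = y := by ring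
  rw [h3] at h2
  linear_combination h2 - h1

lemma gpos (n k : ℕ) : 0 < gchoose ((n:ℚ) + k) k := by
  unfold gchoose
  apply div_pos
  · apply Finset.prod_pos
    intro i hi
    have h1 : (i:ℚ) < k := by exact_mod_cast Finset.mem_range.mp hi
    have h2 : (0:ℚ) ≤ n := by positivity
    linarith
  · exact_mod_cast k.factorial_pos

lemma gne (n k : ℕ) : gchoose ((n:ℚ) + k) k ≠ 0 := ne_of_gt (gpos n k)

lemma gnat_zero {n k : ℕ} (h : n < k) : gchoose (n:ℚ) k = 0 := by
  unfold gchoose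
  rw [Finset.prod_eq_zero (Finset.mem_range.mpr h) (by simp)]
  simp

lemma Z_of_le {p j : ℕ} (h : j ≤ p) (y : ℚ) :
    gchooseZ y ((p:ℤ) - j) = gchoose y (p - j) := by
  unfold gchooseZ
  rw [if_neg (by omega)]
  congr 1
  omega

lemma Z_of_lt {p j : ℕ} (h : p < j) (y : ℚ) :
    gchooseZ y ((p:ℤ) - j) = 0 := by
  unfold gchooseZ
  rw [if_pos (by omega)]

noncomputable def Wt (p q : ℕ) (x : ℚ) (j : ℕ) : ℚ :=
  if j = 0 then gchoose x p * gchoose x q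
  else 2 * (-1)^j * gchooseZ (x - j) ((p:ℤ) - j) * gchooseZ (x - j) ((q:ℤ) - j) *
    gchoose (x + j) j * gchoose x j / (gchoose ((p:ℚ) + j) j * gchoose ((q:ℚ) + j) j)

noncomputable def Gd (p q : ℕ) (x : ℚ) (j : ℕ) : ℚ :=
  if j = 0 then 0 else (x + 1 - j) * ((j:ℚ) + q) * ((j:ℚ) + p + 1) * Wt (p+1) q x j

lemma Wt_vanish {p q j : ℕ} (x : ℚ) (h : min p q < j) : Wt p q x j = 0 := by
  have hj : j ≠ 0 := by omega
  rw [Wt, if_neg hj]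
  rcases Nat.lt_or_ge p j with hp | hp
  · rw [Z_of_lt hp]; ring
  · rw [Z_of_lt (show q < j by omega)]; ring


lemma wz (p q : ℕ) (x : ℚ) (j : ℕ) :
    Gd p q x (j+1) - Gd p q x j
      = 2*((p:ℚ)-x)*((p:ℚ)+1)*((p:ℚ)+(q:ℚ)+1) * Wt (p+1) q x j
        - 2*((p:ℚ)-x)*((p:ℚ)+1)*(x-(p:ℚ)-(q:ℚ)) * Wt p q x j := by
  rcases Nat.eq_zero_or_pos j with rfl | hjpos
  · -- j = 0
    simp only [Nat.zero_add]
    rcases q with _ | qp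
    · -- q = 0
      have hW1 : Wt (p+1) 0 x 1 = 0 := by
        rw [Wt, if_neg one_ne_zero, Z_of_lt (show (0:ℕ) < 1 by omega)]
        ring
      rw [Gd, if_neg one_ne_zero, hW1, Gd, if_pos rfl]
      rw [Wt, if_pos rfl, Wt, if_pos rfl, gchoose_zero]
      linear_combination (norm := (push_cast; ring1)) (-2*((p:ℚ)-x)*((p:ℚ)+1)) * g1 x p
    · -- q = qp+1
      have e1 : gchooseZ (x - ((1:ℕ):ℚ)) ((↑(p+1):ℤ) - (1:ℕ)) = gchoose (x - ((1:ℕ):ℚ)) p := by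
        rw [Z_of_le (by omega)]; congr 1
      have e2 : gchooseZ (x - ((1:ℕ):ℚ)) ((↑(qp+1):ℤ) - (1:ℕ)) = gchoose (x - ((1:ℕ):ℚ)) qp := by
        rw [Z_of_le (by omega)]; congr 1
      have hS : (((p+1:ℕ):ℚ) + ((1:ℕ):ℚ)) * (((qp+1:ℕ):ℚ) + ((1:ℕ):ℚ)) ≠ 0 := by
        push_cast; positivity
      rw [Gd, if_neg one_ne_zero, Gd, if_pos rfl, Wt, if_neg one_ne_zero,
        Wt, if_pos rfl, Wt, if_pos rfl, e1, e2]
      simp only [gchoose_one]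
      rw [sub_zero]
      apply mul_right_cancel₀ hS
      have hNS : 2 * (-1)^1 * gchoose (x - ((1:ℕ):ℚ)) p * gchoose (x - ((1:ℕ):ℚ)) qp *
            (x + ((1:ℕ):ℚ)) * x / ((((p+1:ℕ):ℚ) + ((1:ℕ):ℚ)) * (((qp+1:ℕ):ℚ) + ((1:ℕ):ℚ))) *
            ((((p+1:ℕ):ℚ) + ((1:ℕ):ℚ)) * (((qp+1:ℕ):ℚ) + ((1:ℕ):ℚ)))
          = 2 * (-1)^1 * gchoose (x - ((1:ℕ):ℚ)) p * gchoose (x - ((1:ℕ):ℚ)) qp *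
            (x + ((1:ℕ):ℚ)) * x := div_mul_cancel₀ _ hS
      have hk : (gchoose x (p+1) * ((p:ℚ)+1)) * (gchoose x (qp+1) * ((qp:ℚ)+1))
          = (x * gchoose (x-1) p) * (x * gchoose (x-1) qp) := by rw [g2 x p, g2 x qp]
      linear_combination (norm := (push_cast; ring1))
        ((x+1-((1:ℕ):ℚ)) * (((1:ℕ):ℚ)+((qp+1:ℕ):ℚ)) * (((1:ℕ):ℚ)+(p:ℚ)+1)) * hNS
        + (2*(x+1)*((qp:ℚ)+2)*((p:ℚ)+2)) * hk
        + (2*((p:ℚ)+1)*(x-(p:ℚ)-(qp:ℚ)-1)*(gchoose x (qp+1))*((p:ℚ)+2)*((qp:ℚ)+2)) * g1 x p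
  · -- j ≥ 1
    have hj0 : j ≠ 0 := by omega
    by_cases hcase : j ≤ p ∧ j ≤ q
    · -- main case
      obtain ⟨hjp, hjq⟩ := hcase
      obtain ⟨a, rfl⟩ := Nat.exists_eq_add_of_le hjp
      obtain ⟨b, rfl⟩ := Nat.exists_eq_add_of_le hjq
      have hD0 : gchoose (((j+a:ℕ):ℚ) + (j:ℚ)) j ≠ 0 := gne (j+a) j
      have hD1 : gchoose (((j+a+1:ℕ):ℚ) + (j:ℚ)) j ≠ 0 := gne (j+a+1) j
      have hD2 : gchoose (((j+a+1:ℕ):ℚ) + ((j+1:ℕ):ℚ)) (j+1) ≠ 0 := gne (j+a+1) (j+1)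
      have hE0 : gchoose (((j+b:ℕ):ℚ) + (j:ℚ)) j ≠ 0 := gne (j+b) j
      have hE1 : gchoose (((j+b:ℕ):ℚ) + ((j+1:ℕ):ℚ)) (j+1) ≠ 0 := gne (j+b) (j+1)
      have z1 : gchooseZ (x - (j:ℚ)) ((↑(j+a+1):ℤ) - j) = gchoose (x - (j:ℚ)) (a+1) := by
        rw [Z_of_le (by omega)]; congr 1; omega
      have z0 : gchooseZ (x - (j:ℚ)) ((↑(j+a):ℤ) - j) = gchoose (x - (j:ℚ)) a := by
        rw [Z_of_le (by omega)]; congr 1; omega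
      have z2 : gchooseZ (x - (j:ℚ)) ((↑(j+b):ℤ) - j) = gchoose (x - (j:ℚ)) b := by
        rw [Z_of_le (by omega)]; congr 1; omega
      have z3 : gchooseZ (x - ((j+1:ℕ):ℚ)) ((↑(j+a+1):ℤ) - ↑(j+1)) = gchoose (x - ((j+1:ℕ):ℚ)) a := by
        rw [Z_of_le (by omega)]; congr 1; omega
      have F1 : Wt (j+a+1) (j+b) x j *
            (gchoose (((j+a+1:ℕ):ℚ) + (j:ℚ)) j * gchoose (((j+b:ℕ):ℚ) + (j:ℚ)) j)
          = 2*(-1)^j * (gchoose (x - (j:ℚ)) (a+1) * gchoose (x - (j:ℚ)) b *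
              gchoose (x + (j:ℚ)) j * gchoose x j) := by
        rw [Wt, if_neg hj0, z1, z2, div_mul_cancel₀ _ (mul_ne_zero hD1 hE0)]
        ring
      have F2 : Wt (j+a) (j+b) x j *
            (gchoose (((j+a:ℕ):ℚ) + (j:ℚ)) j * gchoose (((j+b:ℕ):ℚ) + (j:ℚ)) j)
          = 2*(-1)^j * (gchoose (x - (j:ℚ)) a * gchoose (x - (j:ℚ)) b *
              gchoose (x + (j:ℚ)) j * gchoose x j) := by
        rw [Wt, if_neg hj0, z0, z2, div_mul_cancel₀ _ (mul_ne_zero hD0 hE0)]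
        ring
      have F4 : Wt (j+a+1) (j+b) x (j+1) *
            (gchoose (((j+a+1:ℕ):ℚ) + ((j+1:ℕ):ℚ)) (j+1) * gchoose (((j+b:ℕ):ℚ) + ((j+1:ℕ):ℚ)) (j+1))
          = 2*(-1)^(j+1) * (gchoose (x - ((j+1:ℕ):ℚ)) a *
              gchooseZ (x - ((j+1:ℕ):ℚ)) ((↑(j+b):ℤ) - ↑(j+1)) *
              gchoose (x + ((j+1:ℕ):ℚ)) (j+1) * gchoose x (j+1)) := by
        rw [Wt, if_neg (Nat.succ_ne_zero j), z3, div_mul_cancel₀ _ (mul_ne_zero hD2 hE1)]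
        ring
      have sub1 : x - (j:ℚ) - 1 = x - ((j+1:ℕ):ℚ) := by push_cast; ring
      have hr1 := g1 (x - (j:ℚ)) a
      have hr2 := g2 (x - (j:ℚ)) a
      rw [sub1] at hr2
      have hr4 := g2 (x + ((j+1:ℕ):ℚ)) j
      rw [show x + ((j+1:ℕ):ℚ) - 1 = x + (j:ℚ) from by push_cast; ring] at hr4
      have hr5 := g1 x j
      have hr6 := g3 (((j+a:ℕ):ℚ) + (j:ℚ)) j
      rw [show ((j+a:ℕ):ℚ) + (j:ℚ) + 1 = ((j+a+1:ℕ):ℚ) + (j:ℚ) from by push_cast; ring] at hr6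
      have hr7 := g2 (((j+a+1:ℕ):ℚ) + ((j+1:ℕ):ℚ)) j
      rw [show ((j+a+1:ℕ):ℚ) + ((j+1:ℕ):ℚ) - 1 = ((j+a+1:ℕ):ℚ) + (j:ℚ) from by push_cast; ring] at hr7
      have hr8 := g2 (((j+b:ℕ):ℚ) + ((j+1:ℕ):ℚ)) j
      rw [show ((j+b:ℕ):ℚ) + ((j+1:ℕ):ℚ) - 1 = ((j+b:ℕ):ℚ) + (j:ℚ) from by push_cast; ring] at hr8
      have h1' : (x - (j:ℚ)) * (((j:ℚ)+1)^2 * (gchoose (x - ((j+1:ℕ):ℚ)) a *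
              gchooseZ (x - ((j+1:ℕ):ℚ)) ((↑(j+b):ℤ) - ↑(j+1)) *
              gchoose (x + ((j+1:ℕ):ℚ)) (j+1) * gchoose x (j+1)))
          = ((a:ℚ)+1) * (b:ℚ) * (x + ((j+1:ℕ):ℚ)) * (gchoose (x - (j:ℚ)) (a+1) *
              gchoose (x - (j:ℚ)) b * gchoose (x + (j:ℚ)) j * gchoose x j) := by
        rcases b with _ | b'
        · rw [Z_of_lt (show j + 0 < j + 1 by omega)]
          push_cast
          ring
        · have z3q : gchooseZ (x - ((j+1:ℕ):ℚ)) ((↑(j+(b'+1)):ℤ) - ↑(j+1))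
              = gchoose (x - ((j+1:ℕ):ℚ)) b' := by
            rw [Z_of_le (by omega)]; congr 1; omega
          rw [z3q]
          have hr3 := g2 (x - (j:ℚ)) b'
          rw [sub1] at hr3
          rcases eq_or_ne (x - (j:ℚ)) 0 with hxj | hxj
          · have hx0 : gchoose (x - (j:ℚ)) (b'+1) = 0 := by
              rw [hxj]
              simpa using gnat_zero (n := 0) (k := b'+1) (by omega)
            rw [hx0, hxj]
            push_cast
            ring
          · apply mul_left_cancel₀ hxj
            have hprod : ((x - (j:ℚ)) * gchoose (x - ((j+1:ℕ):ℚ)) a) *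
                  ((x - (j:ℚ)) * gchoose (x - ((j+1:ℕ):ℚ)) b') *
                  (gchoose (x + ((j+1:ℕ):ℚ)) (j+1) * ((j:ℚ)+1)) *
                  (gchoose x (j+1) * ((j:ℚ)+1))
                = (gchoose (x - (j:ℚ)) (a+1) * ((a:ℚ)+1)) *
                  (gchoose (x - (j:ℚ)) (b'+1) * ((b':ℚ)+1)) *
                  ((x + ((j+1:ℕ):ℚ)) * gchoose (x + (j:ℚ)) j) *
                  (gchoose x j * (x - (j:ℚ))) := by
              rw [hr4, hr5, ← hr2, ← hr3]
            linear_combination (norm := (push_cast; ring1)) hprod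
      have S1 : Gd (j+a) (j+b) x (j+1) *
            (gchoose (((j+a+1:ℕ):ℚ) + (j:ℚ)) j * gchoose (((j+b:ℕ):ℚ) + (j:ℚ)) j)
          = -2*(-1)^j * ((a:ℚ)+1) * (b:ℚ) * (x + ((j+1:ℕ):ℚ)) * (gchoose (x - (j:ℚ)) (a+1) *
              gchoose (x - (j:ℚ)) b * gchoose (x + (j:ℚ)) j * gchoose x j) := by
        rw [Gd, if_neg (Nat.succ_ne_zero j)]
        apply mul_right_cancel₀ (show (gchoose (((j+a+1:ℕ):ℚ) + ((j+1:ℕ):ℚ)) (j+1) *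
            gchoose (((j+b:ℕ):ℚ) + ((j+1:ℕ):ℚ)) (j+1)) * ((j:ℚ)+1)^2 ≠ 0 from
          mul_ne_zero (mul_ne_zero hD2 hE1) (by positivity))
        linear_combination (norm := (push_cast; ring1))
          ((x - (j:ℚ)) * (((j:ℚ)+1)+((j+b:ℕ):ℚ)) * (((j:ℚ)+1)+((j+a:ℕ):ℚ)+1) * ((j:ℚ)+1)^2 *
            (gchoose (((j+a+1:ℕ):ℚ) + (j:ℚ)) j * gchoose (((j+b:ℕ):ℚ) + (j:ℚ)) j)) * F4
          + (-2*(-1:ℚ)^j * (((j:ℚ)+1)+((j+b:ℕ):ℚ)) * (((j:ℚ)+1)+((j+a:ℕ):ℚ)+1) *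
              (gchoose (((j+a+1:ℕ):ℚ) + (j:ℚ)) j * gchoose (((j+b:ℕ):ℚ) + (j:ℚ)) j)) * h1'
          - (-2*(-1:ℚ)^j * ((a:ℚ)+1) * (b:ℚ) * (x + ((j+1:ℕ):ℚ)) * (gchoose (x - (j:ℚ)) (a+1) *
              gchoose (x - (j:ℚ)) b * gchoose (x + (j:ℚ)) j * gchoose x j) *
              (((j:ℚ)+1) * gchoose (((j+b:ℕ):ℚ) + ((j+1:ℕ):ℚ)) (j+1))) * hr7
          - (-2*(-1:ℚ)^j * ((a:ℚ)+1) * (b:ℚ) * (x + ((j+1:ℕ):ℚ)) * (gchoose (x - (j:ℚ)) (a+1) *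
              gchoose (x - (j:ℚ)) b * gchoose (x + (j:ℚ)) j * gchoose x j) *
              (((j+a:ℕ):ℚ)+(j:ℚ)+2) * gchoose (((j+a+1:ℕ):ℚ) + (j:ℚ)) j) * hr8
      have hGdj : Gd (j+a) (j+b) x j = (x + 1 - (j:ℚ)) * ((j:ℚ) + ((j+b:ℕ):ℚ)) *
          ((j:ℚ) + ((j+a:ℕ):ℚ) + 1) * Wt (j+a+1) (j+b) x j := by
        rw [Gd, if_neg hj0]
      rw [hGdj]
      apply mul_right_cancel₀ (show gchoose (((j+a:ℕ):ℚ) + (j:ℚ)) j *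
          gchoose (((j+a+1:ℕ):ℚ) + (j:ℚ)) j * gchoose (((j+b:ℕ):ℚ) + (j:ℚ)) j ≠ 0 from
        mul_ne_zero (mul_ne_zero hD0 hD1) hE0)
      linear_combination (norm := (push_cast; ring1))
        (gchoose (((j+a:ℕ):ℚ) + (j:ℚ)) j) * S1
        + ((-(x+1-(j:ℚ))*((j:ℚ)+((j+b:ℕ):ℚ))*((j:ℚ)+((j+a:ℕ):ℚ)+1)
            - 2*(((j+a:ℕ):ℚ)-x)*(((j+a:ℕ):ℚ)+1)*(((j+a:ℕ):ℚ)+((j+b:ℕ):ℚ)+1)) *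
            gchoose (((j+a:ℕ):ℚ) + (j:ℚ)) j) * F1
        + (2*(((j+a:ℕ):ℚ)-x)*(((j+a:ℕ):ℚ)+1)*(x-((j+a:ℕ):ℚ)-((j+b:ℕ):ℚ)) *
            gchoose (((j+a+1:ℕ):ℚ) + (j:ℚ)) j) * F2
        + (4*(-1:ℚ)^j*(x-((j+a:ℕ):ℚ)-((j+b:ℕ):ℚ)) * (gchoose (x - (j:ℚ)) b *
            gchoose (x + (j:ℚ)) j * gchoose x j) * (((j+a:ℕ):ℚ)+(j:ℚ)+1) *
            gchoose (((j+a:ℕ):ℚ) + (j:ℚ)) j) * hr1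
        + (4*(-1:ℚ)^j*(x-((j+a:ℕ):ℚ)-((j+b:ℕ):ℚ)) * (gchoose (x - (j:ℚ)) b *
            gchoose (x + (j:ℚ)) j * gchoose x j) * (((j+a:ℕ):ℚ)-x) *
            gchoose (x - (j:ℚ)) a) * hr6
    · by_cases hc2 : j = p+1 ∧ j ≤ q
      · obtain ⟨rfl, hjq⟩ := hc2
        have hW0 : Wt p q x (p+1) = 0 := Wt_vanish x (by omega)
        have hW2 : Wt (p+1) q x (p+1+1) = 0 := Wt_vanish x (by omega)
        rw [Gd, if_neg (Nat.succ_ne_zero (p+1)), hW2, Gd, if_neg (Nat.succ_ne_zero p), hW0]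
        push_cast
        ring
      · have hv1 : Wt (p+1) q x j = 0 := Wt_vanish x (by omega)
        have hv2 : Wt p q x j = 0 := Wt_vanish x (by omega)
        have hv3 : Wt (p+1) q x (j+1) = 0 := Wt_vanish x (by omega)
        rw [Gd, if_neg (Nat.succ_ne_zero j), hv3, Gd, if_neg hj0, hv1, hv2]
        ring


lemma key (p : ℕ) : ∀ (q : ℕ) (x : ℚ), ∑ j ∈ Finset.range (p+q+2), Wt p q x j = gchoose x (p+q) := by
  induction p with
  | zero =>
    intro q x
    have h0 : ∀ b ∈ Finset.range (0+q+2), b ≠ 0 → Wt 0 q x b = 0 := by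
      intro b _ hb
      exact Wt_vanish x (by omega)
    rw [Finset.sum_eq_single_of_mem 0 (Finset.mem_range.mpr (by omega)) h0]
    rw [Wt, if_pos rfl, gchoose_zero, one_mul, Nat.zero_add]
  | succ p ih =>
    intro q x
    rw [show p+1+q = p+q+1 from by omega, show p+q+1+2 = (p+q+2)+1 from by omega,
      Finset.sum_range_succ, Wt_vanish x (show min (p+1) q < p+q+2 by omega), add_zero]
    rcases eq_or_ne x (p:ℚ) with hx | hx
    · subst hx
      have hz : ∀ j ∈ Finset.range (p+q+2), Wt (p+1) q ((p:ℚ)) j = 0 := by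
        intro j _
        rcases Nat.eq_zero_or_pos j with rfl | hj0
        · rw [Wt, if_pos rfl, gnat_zero (show p < p+1 by omega), zero_mul]
        · rcases Nat.lt_or_ge (min (p+1) q) j with hv | hv
          · exact Wt_vanish _ hv
          · rcases Nat.lt_or_ge p j with hpj | hpj
            · have hj : j = p+1 := by omega
              subst hj
              rw [Wt, if_neg (by omega), gnat_zero (show p < p+1 by omega)]
              ring
            · rw [Wt, if_neg (by omega), Z_of_le (show j ≤ p+1 by omega),
                show (p:ℚ) - (j:ℚ) = ((p - j : ℕ) : ℚ) from by
                  rw [Nat.cast_sub hpj],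
                gnat_zero (show p - j < p+1-j by omega)]
              ring
      rw [Finset.sum_eq_zero hz, gnat_zero (show p < p+q+1 by omega)]
    · have tel := Finset.sum_range_sub (Gd p q x) (p+q+2)
      have hGdlast : Gd p q x (p+q+2) = 0 := by
        rw [Gd, if_neg (by omega), Wt_vanish x (show min (p+1) q < p+q+2 by omega)]
        ring
      have hGd0 : Gd p q x 0 = 0 := by rw [Gd, if_pos rfl]
      rw [Finset.sum_congr rfl (fun j _ => wz p q x j), hGdlast, hGd0, sub_zero,
        Finset.sum_sub_distrib, ← Finset.mul_sum, ← Finset.mul_sum, ih q x] at tel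
      have hp1 : ((p:ℚ)+1) ≠ 0 := by positivity
      have hpx : ((p:ℚ)-x) ≠ 0 := sub_ne_zero.mpr (Ne.symm hx)
      have h2 : (2*((p:ℚ)+1)*((p:ℚ)-x)) *
          (((p:ℚ)+(q:ℚ)+1) * (∑ j ∈ Finset.range (p+q+2), Wt (p+1) q x j)
            - (x-(p:ℚ)-(q:ℚ)) * gchoose x (p+q))
          = (2*((p:ℚ)+1)*((p:ℚ)-x)) * 0 := by
        linear_combination tel
      have h3 := mul_left_cancel₀ (by exact mul_ne_zero (mul_ne_zero two_ne_zero hp1) hpx) h2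
      have hpq1 : ((p:ℚ)+(q:ℚ)+1) ≠ 0 := by positivity
      apply mul_left_cancel₀ hpq1
      have hg := g1 x (p+q)
      linear_combination (norm := (push_cast; ring1)) h3 - hg

end Aux4

theorem stmt4 (p q : ℕ) (x : ℚ) :
    gchoose x (p + q) = gchoose x p * gchoose x q +
      ∑ i ∈ Finset.Icc 1 (max p q), (-1 : ℚ) ^ i *
        gchooseZ (x - i) ((p : ℤ) - i) * gchooseZ (x - i) ((q : ℤ) - i) *
        gchoose (x + i) i * gchoose x i * (gchoose (2 * (i : ℚ)) i) ^ 2 /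
        (2 * gchoose ((p : ℚ) + i) i * gchoose ((q : ℚ) + i) i *
          (gchoose (2 * (i : ℚ) - 1) (i - 1)) ^ 2) := by
  open Aux4 in
  have hterm : ∀ i ∈ Finset.Icc 1 (max p q), (-1 : ℚ) ^ i *
        gchooseZ (x - i) ((p : ℤ) - i) * gchooseZ (x - i) ((q : ℤ) - i) *
        gchoose (x + i) i * gchoose x i * (gchoose (2 * (i : ℚ)) i) ^ 2 /
        (2 * gchoose ((p : ℚ) + i) i * gchoose ((q : ℚ) + i) i *
          (gchoose (2 * (i : ℚ) - 1) (i - 1)) ^ 2) = Wt p q x i := by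
    intro i hi
    obtain ⟨k, rfl⟩ : ∃ k, i = k+1 := ⟨i-1, by have := (Finset.mem_Icc.mp hi).1; omega⟩
    have hc2 : gchoose (2*((k+1:ℕ):ℚ)) (k+1) = 2 * gchoose (2*((k+1:ℕ):ℚ)-1) k := by
      have h := g2 (2*((k+1:ℕ):ℚ)) k
      apply mul_right_cancel₀ (show ((k:ℚ)+1) ≠ 0 by positivity)
      linear_combination (norm := (push_cast; ring1)) h
    have hcne : gchoose (2*((k+1:ℕ):ℚ)-1) k ≠ 0 := by
      rw [show 2*((k+1:ℕ):ℚ)-1 = ((k+1:ℕ):ℚ) + (k:ℚ) from by push_cast; ring]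
      exact gne (k+1) k
    have hp : gchoose ((p:ℚ)+((k+1:ℕ):ℚ)) (k+1) ≠ 0 := gne p (k+1)
    have hq : gchoose ((q:ℚ)+((k+1:ℕ):ℚ)) (k+1) ≠ 0 := gne q (k+1)
    rw [Wt, if_neg (Nat.succ_ne_zero k), hc2, show k+1-1 = k from rfl,
      div_eq_div_iff (by
        exact mul_ne_zero (mul_ne_zero (mul_ne_zero two_ne_zero hp) hq) (pow_ne_zero 2 hcne))
      (mul_ne_zero hp hq)]
    ring
  rw [Finset.sum_congr rfl hterm]
  have hext : ∑ i ∈ Finset.Icc 1 (max p q), Wt p q x i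
      = ∑ i ∈ Finset.Icc 1 (p+q+1), Wt p q x i := by
    apply Finset.sum_subset (Finset.Icc_subset_Icc_right (by omega))
    intro i hi hni
    simp only [Finset.mem_Icc] at hi hni
    exact Wt_vanish x (by omega)
  rw [hext]
  have h2 : ∑ j ∈ Finset.range ((p+q+1)+1), Wt p q x j
      = Wt p q x 0 + ∑ i ∈ Finset.Icc 1 (p+q+1), Wt p q x i := by
    rw [Finset.range_eq_Ico, Finset.sum_eq_sum_Ico_succ_bot (by omega), Finset.Ico_add_one_right_eq_Icc]
  have hkey := key p q x
  rw [show p+q+2 = (p+q+1)+1 from by omega, h2] at hkey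
  rw [← hkey, Wt, if_pos rfl]
end

section
/- For every integer h ≥ 1 and rational x, define Q_h(x, z) := Σ_{i=0}^{h} C(x+h, i) · (h!/(h-i)!) · ((2h-1-i)!/(2h-1)!) · z^i as a polynomial in z. Then for h ≥ 3, Q_h satisfies the recurrence Q_h(x,z) = (1 - c_h z)·Q_{h-1}(x,z) - a_h z²·Q_{h-2}(x,z), where c_h = -(1 + 2(h-2)h - x)/((2h-1)(2h-3)) and a_h = -(x-h+2)(x+h-1)/(4(2h-3)²). -/
/-- The denominator convergent polynomial
`Q_h(x, z) = Σ_{i=0}^{h} C(x+h, i) (h!/(h-i)!) ((2h-1-i)!/(2h-1)!) z^i`. -/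
noncomputable def Qpoly (x : ℚ) (h : ℕ) : Polynomial ℚ :=
  ∑ i ∈ Finset.range (h + 1),
    Polynomial.C (gchoose (x + h) i * ((Nat.factorial h : ℚ) / (Nat.factorial (h - i) : ℚ)) *
      ((Nat.factorial (2 * h - 1 - i) : ℚ) / (Nat.factorial (2 * h - 1) : ℚ))) *
      Polynomial.X ^ i

open Polynomial
open scoped Nat

theorem descPochhammer_succ_eval_left {R : Type*} [CommRing R] (n : ℕ) (y : R) :
    (descPochhammer R (n + 1)).eval y = y * (descPochhammer R n).eval (y - 1) := by
  simp [descPochhammer_succ_left, eval_comp]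

theorem gchoose_eq_descPochhammer_eval (y : ℚ) (k : ℕ) :
    gchoose y k = (descPochhammer ℚ k).eval y / k ! := by
  rw [gchoose, descPochhammer_eval_eq_prod_range]

theorem factorial_div_factorial_sub_eq_descPochhammer_eval {K : Type*} [Field K] [CharZero K]
    {n k : ℕ} (hk : k ≤ n) : (n ! : K) / (n - k)! = (descPochhammer K k).eval (n : K) := by
  rw [descPochhammer_eval_eq_descFactorial,
    div_eq_iff (Nat.cast_ne_zero.mpr (Nat.factorial_ne_zero _)),
    ← Nat.factorial_mul_descFactorial hk]
  push_cast
  ring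

/-- The coefficient of `z ^ i` in `Q_h(x, z)`, written with descending factorials
`(y)_i = y (y - 1) ⋯ (y - i + 1)` and extended to rational `h`. -/
noncomputable def Qcoeff (x h : ℚ) (i : ℕ) : ℚ :=
  (descPochhammer ℚ i).eval (x + h) * (descPochhammer ℚ i).eval h /
    (i ! * (descPochhammer ℚ i).eval (2 * h - 1))

theorem Qcoeff_zero (x h : ℚ) : Qcoeff x h 0 = 1 := by simp [Qcoeff]

theorem Qcoeff_eq_zero_of_lt (x : ℚ) {h i : ℕ} (hi : h < i) : Qcoeff x h i = 0 := by
  simp [Qcoeff, descPochhammer_eval_coe_nat_of_lt hi]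

theorem coeff_Qpoly (x : ℚ) (h i : ℕ) : (Qpoly x h).coeff i = Qcoeff x h i := by
  simp only [Qpoly, finsetSum_coeff, coeff_C_mul, coeff_X_pow, mul_ite, mul_one, mul_zero,
    Finset.sum_ite_eq, Finset.mem_range, Nat.lt_succ_iff]
  split_ifs with hi
  · obtain rfl | hi0 := Nat.eq_zero_or_pos i
    · simp [Qcoeff, gchoose, div_self, Nat.factorial_ne_zero]
    have h2 : ((2 * h - 1 : ℕ) : ℚ) = 2 * h - 1 := by
      rw [Nat.cast_sub (by omega)]; push_cast; ring
    have hden : ((2 * h - 1 - i)! : ℚ) / (2 * h - 1)! =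
        ((descPochhammer ℚ i).eval (2 * (h : ℚ) - 1))⁻¹ := by
      rw [← inv_div, factorial_div_factorial_sub_eq_descPochhammer_eval (by omega), h2]
    rw [gchoose_eq_descPochhammer_eval, factorial_div_factorial_sub_eq_descPochhammer_eval hi, hden,
      Qcoeff]
    field_simp
  · exact (Qcoeff_eq_zero_of_lt x (by omega)).symm

theorem Qcoeff_succ (x h : ℚ) (n : ℕ) :
    Qcoeff x h (n + 1) =
      Qcoeff x h n * ((x + h - n) * (h - n) / ((n + 1) * (2 * h - 1 - n))) := by
  unfold Qcoeff
  rw [div_mul_div_comm, descPochhammer_succ_eval, descPochhammer_succ_eval,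
    descPochhammer_succ_eval, Nat.factorial_succ]
  push_cast
  ring

theorem Qcoeff_succ_eq_Qcoeff_sub_one_mul (x h : ℚ) (n : ℕ) (hn : 2 * h - 2 - n ≠ 0) :
    Qcoeff x h (n + 1) =
      Qcoeff x (h - 1) n *
        ((x + h) * h * (2 * h - 2 - n) / ((n + 1) * (2 * h - 1) * (2 * h - 2))) := by
  have hshift : (descPochhammer ℚ n).eval (2 * h - 2) * (2 * h - 2 - n) =
      (2 * h - 2) * (descPochhammer ℚ n).eval (2 * h - 3) := by
    rw [← descPochhammer_succ_eval, descPochhammer_succ_eval_left]; ring_nf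
  have hden : (descPochhammer ℚ (n + 1)).eval (2 * h - 1) =
      (2 * h - 1) * ((2 * h - 2) * (descPochhammer ℚ n).eval (2 * h - 3) / (2 * h - 2 - n)) := by
    rw [descPochhammer_succ_eval_left, ← hshift, mul_div_cancel_right₀ _ hn]; ring_nf
  simp only [Qcoeff, descPochhammer_succ_eval_left, hden, Nat.factorial_succ, Nat.cast_mul,
    Nat.cast_succ, show x + h - 1 = x + (h - 1) by ring, show 2 * h - 3 = 2 * (h - 1) - 1 by ring]
  field_simp

-- `c_h` and `a_h`
noncomputable def recC (x h : ℚ) : ℚ := -(1 + 2 * (h - 2) * h - x) / ((2 * h - 1) * (2 * h - 3))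

noncomputable def recA (x h : ℚ) : ℚ := -(x - h + 2) * (x + h - 1) / (4 * (2 * h - 3) ^ 2)

theorem Qcoeff_one_recurrence (x h : ℚ) (hh : 3 < 2 * h) :
    Qcoeff x h 1 = Qcoeff x (h - 1) 1 - recC x h * Qcoeff x (h - 1) 0 := by
  -- written `h * 2 - _`, the normal form in which `field_simp` asks for nonvanishing denominators
  have h1 : h * 2 - 1 ≠ 0 := ne_of_gt (by linarith)
  have h3 : h * 2 - 3 ≠ 0 := ne_of_gt (by linarith)
  have h1' : h - 1 ≠ 0 := ne_of_gt (by linarith)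
  have hT0 : Qcoeff x h 1 = (x + h) * h / (2 * h - 1) := by
    rw [Qcoeff_succ_eq_Qcoeff_sub_one_mul x h 0 (by simp; linarith), Qcoeff_zero]
    field_simp
    push_cast
    ring
  have hT1 : Qcoeff x (h - 1) 1 = (x + h - 1) * (h - 1) / (2 * h - 3) := by
    rw [Qcoeff_succ, Qcoeff_zero]; ring_nf
  rw [hT0, hT1, Qcoeff_zero, recC]
  field_simp
  ring

theorem Qcoeff_add_two_recurrence (x h : ℚ) (m : ℕ) (hm : (m : ℚ) + 4 < 2 * h) :
    Qcoeff x h (m + 2) = Qcoeff x (h - 1) (m + 2) - recC x h * Qcoeff x (h - 1) (m + 1) -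
      recA x h * Qcoeff x (h - 2) m := by
  have h1 : h * 2 - 1 ≠ 0 := ne_of_gt (by linarith)
  have h3 : h * 2 - 3 ≠ 0 := ne_of_gt (by linarith)
  have h4 : h * 2 - 4 ≠ 0 := ne_of_gt (by linarith)
  have h4m : h * 2 - 4 - m ≠ 0 := ne_of_gt (by linarith)
  have h1' : h - 1 ≠ 0 := ne_of_gt (by linarith)
  have hT0 : Qcoeff x h (m + 2) = Qcoeff x (h - 1) (m + 1) *
      ((x + h) * h * (2 * h - 3 - m) / ((m + 2) * (2 * h - 1) * (2 * h - 2))) := by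
    rw [Qcoeff_succ_eq_Qcoeff_sub_one_mul x h (m + 1) (by push_cast; linarith)]
    push_cast
    ring_nf
  have hT1 : Qcoeff x (h - 1) (m + 2) = Qcoeff x (h - 1) (m + 1) *
      ((x + h - 2 - m) * (h - 2 - m) / ((m + 2) * (2 * h - 4 - m))) := by
    rw [Qcoeff_succ]; push_cast; ring_nf
  have hT2 : Qcoeff x (h - 1) (m + 1) = Qcoeff x (h - 2) m *
      ((x + h - 1) * (h - 1) * (2 * h - 4 - m) / ((m + 1) * (2 * h - 3) * (2 * h - 4))) := by
    rw [Qcoeff_succ_eq_Qcoeff_sub_one_mul x (h - 1) m (by linarith)]; ring_nf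
  rw [hT0, hT1, hT2, recC, recA]
  field_simp
  ring

theorem stmt6 (h : ℕ) (hh : 3 ≤ h) (x : ℚ) :
    Qpoly x h =
      (1 - Polynomial.C (-(1 + 2 * ((h : ℚ) - 2) * (h : ℚ) - x) /
          ((2 * (h : ℚ) - 1) * (2 * (h : ℚ) - 3))) * Polynomial.X) * Qpoly x (h - 1) -
        Polynomial.C (-(x - (h : ℚ) + 2) * (x + (h : ℚ) - 1) / (4 * (2 * (h : ℚ) - 3) ^ 2)) *
          Polynomial.X ^ 2 * Qpoly x (h - 2) := by
  change Qpoly x h =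
    (1 - C (recC x h) * X) * Qpoly x (h - 1) - C (recA x h) * X ^ 2 * Qpoly x (h - 2)
  have h1 : ((h - 1 : ℕ) : ℚ) = h - 1 := by rw [Nat.cast_sub (by omega), Nat.cast_one]
  have h2 : ((h - 2 : ℕ) : ℚ) = h - 2 := by rw [Nat.cast_sub (by omega), Nat.cast_ofNat]
  ext (_ | _ | m) <;> simp only [sub_mul, one_mul, pow_two, mul_assoc, coeff_sub, coeff_C_mul,
    coeff_X_mul, coeff_X_mul_zero, coeff_Qpoly]
  · simp [Qcoeff_zero]
  · simpa [h1] using Qcoeff_one_recurrence x h (by exact_mod_cast (by omega : 3 < 2 * h))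
  · rcases le_or_gt (m + 2) h with hm | hm
    · simpa [h1, h2] using
        Qcoeff_add_two_recurrence x h m (by exact_mod_cast (by omega : m + 4 < 2 * h))
    · rw [Qcoeff_eq_zero_of_lt x hm, Qcoeff_eq_zero_of_lt x (by omega : h - 1 < m + 2),
        Qcoeff_eq_zero_of_lt x (by omega : h - 1 < m + 1),
        Qcoeff_eq_zero_of_lt x (by omega : h - 2 < m)]
      ring
end
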